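/- Let α be Verblunsky coefficients with α_n ≠ 0 for all n and lim_{n→∞} α_n/α_{n−1} = b ∈ (0,1). Then for every ε ∈ (0,b), uniformly on {|z| ≤ b − ε}, lim_{n→∞} Φ_n(z)/conj(α_{n−1}) = −S(z) (1 − z/b)^{-1}. -/

import Mathlib

open Polynomial Filter Topology

/-- The monic orthogonal polynomials on the unit circle, defined by the Szegő
recursion `Φ₀ = 1`, `Φ_{n+1}(z) = z Φ_n(z) - conj(α_n) Φ_n^*(z)`, where the reversed
polynomial is `P^*(z) = Σ_{j=0}^n conj(c_{n-j}) z^j`. -/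
noncomputable def PhiP (α : ℕ → ℂ) : ℕ → Polynomial ℂ
  | 0 => 1
  | n + 1 => X * PhiP α n -
      Polynomial.C ((starRingEnd ℂ) (α n)) *
        Polynomial.reflect n (Polynomial.map (starRingEnd ℂ) (PhiP α n))

/-- The reversed polynomial `Φ_n^*(z) = z^n conj(Φ_n(1/conj z))`. -/
noncomputable def PhiStarP (α : ℕ → ℂ) (n : ℕ) : Polynomial ℂ :=
  Polynomial.reflect n (Polynomial.map (starRingEnd ℂ) (PhiP α n))

/-!
With `Fₙ = Φₙ / conj αₙ₋₁` the Szegő recursion becomes `Fₙ₊₁ = cₙ z Fₙ - Φₙ*` with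
`cₙ = conj (αₙ₋₁ / αₙ) → 1/b`. The ratio test makes `∑ |αₙ|` finite, which bounds `Φₙ` on the
closed unit disk; the M-test applied to `Φₙ₊₁* - Φₙ* = -αₙ z Φₙ` then upgrades `Φₙ* → S` to uniform
convergence there. On `|z| ≤ b - ε` the limiting multiplier `z / b` is a strict contraction, so
the distance from `Fₙ` to the fixed point `-S / (1 - z/b)` of the limiting recursion obeys a
contraction inequality with uniformly vanishing perturbation, and tends to `0` uniformly.
-/

open Metric Finset

section Reflect

variable {R : Type*} [CommSemiring R] {p : R[X]} {n : ℕ}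

theorem Polynomial.reflect_succ_X_mul (h : p.natDegree ≤ n) :
    reflect (n + 1) (X * p) = reflect n p := by
  simpa [add_comm 1 n] using reflect_mul X p natDegree_X_le h

theorem Polynomial.reflect_succ_reflect (h : p.natDegree ≤ n) :
    reflect (n + 1) (reflect n p) = X * p := by
  rw [← reflect_succ_X_mul h, reflect_reflect]

end Reflect

section Szego

variable (α : ℕ → ℂ)

theorem natDegree_PhiP_le (n : ℕ) : (PhiP α n).natDegree ≤ n := by
  induction n with
  | zero => simp [PhiP]
  | succ n ih =>
    rw [PhiP]
    refine (natDegree_sub_le _ _).trans (max_le ?_ ?_)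
    · exact natDegree_mul_le.trans (by rw [natDegree_X]; omega)
    · refine natDegree_C_mul_le _ _ |>.trans (natDegree_reflect_le.trans ?_)
      exact max_le n.le_succ (natDegree_map_le.trans (ih.trans n.le_succ))

theorem PhiStarP_succ (n : ℕ) :
    PhiStarP α (n + 1) = PhiStarP α n - C (α n) * X * PhiP α n := by
  have h := natDegree_PhiP_le α n
  have hconj : Polynomial.map (starRingEnd ℂ) (reflect n ((PhiP α n).map (starRingEnd ℂ))) =
      reflect n (PhiP α n) := by
    rw [← reflect_map, Polynomial.map_map]
    simp
  rw [PhiStarP, PhiP, Polynomial.map_sub, Polynomial.map_mul, Polynomial.map_mul, Polynomial.map_X,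
    map_C, hconj, reflect_sub, reflect_succ_X_mul (natDegree_map_le.trans h), reflect_C_mul,
    reflect_succ_reflect h, PhiStarP]
  simp only [Complex.conj_conj]
  ring

theorem eval_PhiP_succ (n : ℕ) (z : ℂ) :
    (PhiP α (n + 1)).eval z =
      z * (PhiP α n).eval z - starRingEnd ℂ (α n) * (PhiStarP α n).eval z := by
  simp [PhiP, PhiStarP]

theorem eval_PhiStarP_succ (n : ℕ) (z : ℂ) :
    (PhiStarP α (n + 1)).eval z = (PhiStarP α n).eval z - α n * z * (PhiP α n).eval z := by
  simp [PhiStarP_succ]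

theorem eval_PhiP_succ_div_conj (hα : ∀ n, α n ≠ 0) (n : ℕ) (z : ℂ) :
    (PhiP α (n + 1)).eval z / starRingEnd ℂ (α (n + 1 - 1)) =
      starRingEnd ℂ (α (n - 1)) / starRingEnd ℂ (α n) * z *
        ((PhiP α n).eval z / starRingEnd ℂ (α (n - 1))) - (PhiStarP α n).eval z := by
  have h1 : starRingEnd ℂ (α n) ≠ 0 := by simpa using hα n
  have h2 : starRingEnd ℂ (α (n - 1)) ≠ 0 := by simpa using hα (n - 1)
  rw [Nat.add_sub_cancel, eval_PhiP_succ]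
  field_simp

theorem norm_eval_PhiP_le_prod {z : ℂ} (hz : ‖z‖ ≤ 1) (n : ℕ) :
    ‖(PhiP α n).eval z‖ ≤ ∏ k ∈ range n, (1 + ‖α k‖) ∧
      ‖(PhiStarP α n).eval z‖ ≤ ∏ k ∈ range n, (1 + ‖α k‖) := by
  induction n with
  | zero => simp [PhiP, PhiStarP]
  | succ n ih =>
    obtain ⟨hΦ, hΦstar⟩ := ih
    set B := ∏ k ∈ range n, (1 + ‖α k‖)
    have hB : 0 ≤ B := prod_nonneg fun k _ => by positivity
    rw [prod_range_succ, eval_PhiP_succ, eval_PhiStarP_succ]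
    constructor
    · calc _ ≤ ‖z‖ * ‖(PhiP α n).eval z‖ + ‖α n‖ * ‖(PhiStarP α n).eval z‖ := by
            refine (norm_sub_le _ _).trans_eq ?_
            rw [norm_mul, norm_mul, Complex.norm_conj]
        _ ≤ 1 * B + ‖α n‖ * B := by gcongr
        _ = B * (1 + ‖α n‖) := by ring
    · calc _ ≤ ‖(PhiStarP α n).eval z‖ + ‖α n‖ * ‖z‖ * ‖(PhiP α n).eval z‖ := by
            refine (norm_sub_le _ _).trans_eq ?_
            rw [norm_mul, norm_mul]
        _ ≤ B + ‖α n‖ * 1 * B := by gcongr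
        _ = B * (1 + ‖α n‖) := by ring

theorem tendstoUniformlyOn_eval_PhiStarP (hα : Summable fun n => ‖α n‖) {S : ℂ → ℂ}
    (hS : ∀ z ∈ closedBall (0 : ℂ) 1,
      Tendsto (fun n => (PhiStarP α n).eval z) atTop (𝓝 (S z))) :
    TendstoUniformlyOn (fun n z => (PhiStarP α n).eval z) S atTop (closedBall 0 1) := by
  set M := Real.exp (∑' k, ‖α k‖)
  have hΦ : ∀ k, ∀ z ∈ closedBall (0 : ℂ) 1, ‖(PhiP α k).eval z‖ ≤ M :=
    fun k z hz =>
    (norm_eval_PhiP_le_prod α (mem_closedBall_zero_iff.1 hz) k).1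
      |>.trans (Real.prod_one_add_le_exp_sum _ fun _ => norm_nonneg _)
      |>.trans (Real.exp_le_exp.2 (hα.sum_le_tsum _ fun _ _ => norm_nonneg _))
  have hincrements := tendstoUniformlyOn_tsum_nat (hα.mul_right M)
    (f := fun k z => (PhiStarP α (k + 1)).eval z - (PhiStarP α k).eval z) fun k z hz => by
      rw [eval_PhiStarP_succ, sub_sub_cancel_left, norm_neg, norm_mul, norm_mul]
      calc ‖α k‖ * ‖z‖ * ‖(PhiP α k).eval z‖ ≤ ‖α k‖ * 1 * M := by
            gcongr
            · exact mem_closedBall_zero_iff.1 hz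
            · exact hΦ k z hz
        _ = ‖α k‖ * M := by ring
  have hpartial := (tendsto_const_nhds (x := (1 : ℂ))).tendstoUniformlyOn_const
    (closedBall (0 : ℂ) 1) |>.add hincrements
  refine (hpartial.congr (Eventually.of_forall fun n z _ => ?_)).uniformCauchySeqOn
    |>.tendstoUniformlyOn_of_tendsto hS
  have h0 : (PhiStarP α 0).eval z = 1 := by simp [PhiStarP, PhiP]
  show 1 + ∑ k ∈ range n, ((PhiStarP α (k + 1)).eval z - (PhiStarP α k).eval z) = _
  rw [sum_range_sub (fun k => (PhiStarP α k).eval z), h0]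
  ring

end Szego

theorem Filter.Tendsto.tendstoUniformlyOn_mul_of_norm_le {ι X 𝕜 : Type*}
    [NonUnitalSeminormedRing 𝕜] {l : Filter ι} {u : ι → 𝕜} (hu : Tendsto u l (𝓝 0))
    {h : X → 𝕜} {s : Set X} {K : ℝ} (hK : ∀ x ∈ s, ‖h x‖ ≤ K) :
    TendstoUniformlyOn (fun n x => u n * h x) 0 l s := by
  rw [Metric.tendstoUniformlyOn_iff]
  intro η hη
  have hK' : 0 < max K 0 + 1 := by positivity
  filter_upwards [NormedAddGroup.tendsto_nhds_zero.1 hu (η / (max K 0 + 1)) (by positivity)]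
    with n hn x hx
  rw [Pi.zero_apply, dist_zero_left]
  calc ‖u n * h x‖ ≤ ‖u n‖ * (max K 0 + 1) :=
        (norm_mul_le _ _).trans (by gcongr; linarith [hK x hx, le_max_left K 0])
    _ < η := by rwa [lt_div_iff₀ hK'] at hn

theorem tendstoUniformlyOn_of_norm_sub_le_mul_add {X E E' : Type*} [SeminormedAddCommGroup E]
    [SeminormedAddCommGroup E'] {F : ℕ → X → E} {g : X → E} {r : ℕ → X → E'}
    {s : Set X} {θ : ℝ} (hθ0 : 0 ≤ θ) (hθ1 : θ < 1) (hr : TendstoUniformlyOn r 0 atTop s)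
    (hbdd : ∀ n, ∃ C, ∀ x ∈ s, ‖F n x - g x‖ ≤ C)
    (hrec : ∀ᶠ n in atTop, ∀ x ∈ s,
      ‖F (n + 1) x - g x‖ ≤ θ * ‖F n x - g x‖ + ‖r n x‖) :
    TendstoUniformlyOn F g atTop s := by
  rw [Metric.tendstoUniformlyOn_iff]
  intro η hη
  have hr' := Metric.tendstoUniformlyOn_iff.1 hr (η * (1 - θ) / 2) (by nlinarith)
  obtain ⟨N, hN⟩ := eventually_atTop.1 (hrec.and hr')
  obtain ⟨C, hC⟩ := hbdd N
  have hdecay : ∀ j, ∀ x ∈ s, ‖F (N + j) x - g x‖ ≤ θ ^ j * C + η / 2 := by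
    intro j
    induction j with
    | zero =>
      intro x hx
      rw [add_zero, pow_zero, one_mul]
      linarith [hC x hx]
    | succ j ih =>
      intro x hx
      have hrx : ‖r (N + j) x‖ < η * (1 - θ) / 2 := by
        simpa using (hN (N + j) (Nat.le_add_right N j)).2 x hx
      calc ‖F (N + j + 1) x - g x‖ ≤ θ * ‖F (N + j) x - g x‖ + ‖r (N + j) x‖ :=
            (hN (N + j) (Nat.le_add_right N j)).1 x hx
        _ ≤ θ * (θ ^ j * C + η / 2) + η * (1 - θ) / 2 := by gcongr; exact ih x hx
        _ = θ ^ (j + 1) * C + η / 2 := by ring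
  have hpow : Tendsto (fun j => θ ^ j * C) atTop (𝓝 0) := by
    simpa using (tendsto_pow_atTop_nhds_zero_of_lt_one hθ0 hθ1).mul_const C
  obtain ⟨J, hJ⟩ := eventually_atTop.1 (hpow.eventually (gt_mem_nhds (half_pos hη)))
  refine eventually_atTop.2 ⟨N + J, fun n hn x hx => ?_⟩
  obtain ⟨j, rfl⟩ := Nat.exists_eq_add_of_le (le_of_add_le_left hn)
  rw [dist_comm, dist_eq_norm]
  linarith [hdecay j x hx, hJ j (by omega)]

/-- The limit `-S / (1 - a z)` is the fixed point of the limiting recursion `G = a z G - S`. -/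
theorem tendstoUniformlyOn_of_succ_eq_mul_sub {s : Set ℂ} (hs : IsCompact s) {R : ℝ}
    (hR : ∀ z ∈ s, ‖z‖ ≤ R) {a : ℂ} (haR : ‖a‖ * R < 1) {c : ℕ → ℂ}
    (hc : Tendsto c atTop (𝓝 a)) {F P : ℕ → ℂ → ℂ} {S : ℂ → ℂ}
    (hF : ∀ n, ContinuousOn (F n) s) (hSc : ContinuousOn S s)
    (hP : TendstoUniformlyOn P S atTop s)
    (hrec : ∀ n z, F (n + 1) z = c n * z * F n z - P n z) :
    TendstoUniformlyOn F (fun z => -S z * (1 - a * z)⁻¹) atTop s := by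
  set g := fun z => -S z * (1 - a * z)⁻¹
  have hne : ∀ z ∈ s, 1 - a * z ≠ 0 := by
    intro z hz h
    have : ‖a * z‖ < 1 := by
      rw [norm_mul]
      exact (mul_le_mul_of_nonneg_left (hR z hz) (norm_nonneg a)).trans_lt haR
    rw [← sub_eq_zero.1 h, norm_one] at this
    exact lt_irrefl _ this
  have hgc : ContinuousOn g s :=
    hSc.neg.mul ((continuousOn_const.sub (continuousOn_const.mul continuousOn_id)).inv₀ hne)
  have hfix : ∀ z ∈ s, g z = a * z * g z - S z := by
    intro z hz
    simp only [g]
    field_simp [hne z hz]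
    ring
  obtain ⟨K, hK⟩ := hs.exists_bound_of_continuousOn (continuousOn_id.mul hgc)
  obtain ⟨θ, hθ, hθ1⟩ := exists_between (max_lt haR zero_lt_one)
  have hSP : TendstoUniformlyOn (fun n z => S z - P n z) 0 atTop s := by
    refine Metric.tendstoUniformlyOn_iff.2 fun η hη => ?_
    filter_upwards [Metric.tendstoUniformlyOn_iff.1 hP η hη] with n hn z hz
    simpa [dist_eq_norm, norm_sub_rev] using hn z hz
  refine tendstoUniformlyOn_of_norm_sub_le_mul_add ((le_max_right _ _).trans hθ.le) hθ1
    (r := fun n z => (c n - a) * (z * g z) + (S z - P n z)) ?_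
    (fun n => hs.exists_bound_of_continuousOn ((hF n).sub hgc)) ?_
  · have hca : Tendsto (fun n => c n - a) atTop (𝓝 0) := by simpa using hc.sub_const a
    have h := (hca.tendstoUniformlyOn_mul_of_norm_le hK).add hSP
    rw [add_zero] at h
    exact h
  · have hcR := (hc.norm.mul_const R).eventually (gt_mem_nhds ((le_max_left _ _).trans_lt hθ))
    filter_upwards [hcR] with n hn z hz
    have herr : F (n + 1) z - g z =
        c n * z * (F n z - g z) + ((c n - a) * (z * g z) + (S z - P n z)) := by
      linear_combination hrec n z - hfix z hz
    rw [herr]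
    refine (norm_add_le _ _).trans ?_
    gcongr ?_ + _
    rw [norm_mul, norm_mul]
    gcongr
    exact (mul_le_mul_of_nonneg_left (hR z hz) (norm_nonneg _)).trans hn.le

theorem stmt_9_general (α : ℕ → ℂ)
    (hnz : ∀ n, α n ≠ 0) (b : ℝ) (hb0 : 0 < b) (hb1 : b < 1)
    (hratio : Tendsto (fun n : ℕ => α (n + 1) / α n) atTop (nhds (b : ℂ)))
    (S : ℂ → ℂ)
    (hS : ∀ z : ℂ, ‖z‖ < 1 / b →
      Tendsto (fun n : ℕ => (PhiStarP α n).eval z) atTop (nhds (S z)))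
 :
    ∀ ε : ℝ, 0 < ε → ε < b →
      TendstoUniformlyOn
        (fun (n : ℕ) (z : ℂ) => (PhiP α n).eval z / (starRingEnd ℂ) (α (n - 1)))
        (fun z : ℂ => -S z * (1 - z / (b : ℂ))⁻¹) atTop
        {z : ℂ | ‖z‖ ≤ b - ε} := by
  intro ε hε hεb
  have hb : (b : ℂ) ≠ 0 := by exact_mod_cast hb0.ne'
  have hsum : Summable fun n => ‖α n‖ :=
    (summable_of_ratio_test_tendsto_lt_one hb1 (Eventually.of_forall hnz)
      (by simpa [norm_div, abs_of_pos hb0] using hratio.norm)).norm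
  have hS1 := tendstoUniformlyOn_eval_PhiStarP α hsum fun z hz =>
    hS z ((mem_closedBall_zero_iff.1 hz).trans_lt (one_lt_one_div hb0 hb1))
  have hdisk : {z : ℂ | ‖z‖ ≤ b - ε} = closedBall 0 (b - ε) := by ext; simp
  have hsub : closedBall (0 : ℂ) (b - ε) ⊆ closedBall 0 1 :=
    closedBall_subset_closedBall (by linarith)
  have hc : Tendsto (fun n => starRingEnd ℂ (α (n - 1)) / starRingEnd ℂ (α n)) atTop
      (𝓝 (b : ℂ)⁻¹) := by
    refine (tendsto_add_atTop_iff_nat 1).1 ?_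
    simpa [Function.comp_def] using (Complex.continuous_conj.tendsto _).comp (hratio.inv₀ hb)
  have hSc : ContinuousOn S (closedBall 0 (b - ε)) :=
    (hS1.mono hsub).continuousOn (Frequently.of_forall fun n => (PhiStarP α n).continuousOn)
  have hcontr : ‖(b : ℂ)⁻¹‖ * (b - ε) < 1 := by
    rw [norm_inv, Complex.norm_real, Real.norm_of_nonneg hb0.le, ← div_eq_inv_mul, div_lt_one hb0]
    linarith
  have hlim : (fun z : ℂ => -S z * (1 - z / (b : ℂ))⁻¹) =
      fun z => -S z * (1 - (b : ℂ)⁻¹ * z)⁻¹ := by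
    simp_rw [div_eq_inv_mul]
  rw [hdisk, hlim]
  exact tendstoUniformlyOn_of_succ_eq_mul_sub (isCompact_closedBall 0 (b - ε))
    (fun z hz => mem_closedBall_zero_iff.1 hz) hcontr hc
    (fun n => ((PhiP α n).continuous.div_const _).continuousOn) hSc (hS1.mono hsub)
    (eval_PhiP_succ_div_conj α hnz)

theorem stmt_9 (α : ℕ → ℂ) (hα : ∀ n, ‖α n‖ < 1)
    (hnz : ∀ n, α n ≠ 0) (b : ℝ) (hb0 : 0 < b) (hb1 : b < 1)
    (hratio : Tendsto (fun n : ℕ => α (n + 1) / α n) atTop (nhds (b : ℂ)))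
    (S : ℂ → ℂ)
    (hS : ∀ z : ℂ, ‖z‖ < 1 / b →
      Tendsto (fun n : ℕ => (PhiStarP α n).eval z) atTop (nhds (S z)))
 :
    ∀ ε : ℝ, 0 < ε → ε < b →
      TendstoUniformlyOn
        (fun (n : ℕ) (z : ℂ) => (PhiP α n).eval z / (starRingEnd ℂ) (α (n - 1)))
        (fun z : ℂ => -S z * (1 - z / (b : ℂ))⁻¹) atTop
        {z : ℂ | ‖z‖ ≤ b - ε} :=
  stmt_9_general α hnz b hb0 hb1 hratio S hS
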